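/- Typability preservation for the typing-derivation-directed CPS transformation: if Γ ⊢_ATM v : τ (by derivation D) then ⟦Γ⟧ ⊢_ST ⟦D⟧ : ⟦τ⟧, and if Γ ⊢_ATM c : ρ (by derivation D) then ⟦Γ⟧ ⊢_ST ⟦D⟧ : ⟦ρ⟧, where the CPS-transformed term contains no effect handlers or operation invocations. -/

import Mathlib

namespace LEH

/-! ## Syntax of λEH (finitary PCF with effect handlers), extended with records,
    in de Bruijn representation.  A handler is represented by its return clause
    (one binder) and, for each operation name `o : ℕ`, an operation clause
    (two binders: the parameter `x` at index 1 and the continuation `k` at index 0). -/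

mutual
inductive Val : Type
| var (n : ℕ)
| unit
| tt
| ff
| lam (c : Comp)
| fix (v : Val)              -- rec x = v
| record (f : ℕ → Val)
inductive Comp : Type
| ret (v : Val)
| op (o : ℕ) (v : Val)
| app (v₁ v₂ : Val)
| ite (v : Val) (c₁ c₂ : Comp)
| letin (c₁ c₂ : Comp)
| handle (hret : Comp) (hops : ℕ → Comp) (c : Comp)
| proj (v : Val) (l : ℕ)
end

def liftR (ξ : ℕ → ℕ) : ℕ → ℕ
| 0 => 0
| n+1 => ξ n + 1

mutual
def renameV (ξ : ℕ → ℕ) : Val → Val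
| .var n => .var (ξ n)
| .unit => .unit
| .tt => .tt
| .ff => .ff
| .lam c => .lam (renameC (liftR ξ) c)
| .fix v => .fix (renameV (liftR ξ) v)
| .record f => .record (fun o => renameV ξ (f o))
def renameC (ξ : ℕ → ℕ) : Comp → Comp
| .ret v => .ret (renameV ξ v)
| .op o v => .op o (renameV ξ v)
| .app v₁ v₂ => .app (renameV ξ v₁) (renameV ξ v₂)
| .ite v c₁ c₂ => .ite (renameV ξ v) (renameC ξ c₁) (renameC ξ c₂)
| .letin c₁ c₂ => .letin (renameC ξ c₁) (renameC (liftR ξ) c₂)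
| .handle r ops c =>
    .handle (renameC (liftR ξ) r) (fun o => renameC (liftR (liftR ξ)) (ops o)) (renameC ξ c)
| .proj v l => .proj (renameV ξ v) l
end

def liftS (σ : ℕ → Val) : ℕ → Val
| 0 => .var 0
| n+1 => renameV Nat.succ (σ n)

mutual
def substV (σ : ℕ → Val) : Val → Val
| .var n => σ n
| .unit => .unit
| .tt => .tt
| .ff => .ff
| .lam c => .lam (substC (liftS σ) c)
| .fix v => .fix (substV (liftS σ) v)
| .record f => .record (fun o => substV σ (f o))
def substC (σ : ℕ → Val) : Comp → Comp
| .ret v => .ret (substV σ v)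
| .op o v => .op o (substV σ v)
| .app v₁ v₂ => .app (substV σ v₁) (substV σ v₂)
| .ite v c₁ c₂ => .ite (substV σ v) (substC σ c₁) (substC σ c₂)
| .letin c₁ c₂ => .letin (substC σ c₁) (substC (liftS σ) c₂)
| .handle r ops c =>
    .handle (substC (liftS σ) r) (fun o => substC (liftS (liftS σ)) (ops o)) (substC σ c)
| .proj v l => .proj (substV σ v) l
end

/-- substitution of a single value for de Bruijn index 0 -/
def sub1 (v : Val) : ℕ → Val
| 0 => v
| n+1 => .var n

/-- substitution of two values: index 1 ↦ `x` (operation parameter),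
    index 0 ↦ `k` (captured continuation) -/
def sub2 (x k : Val) : ℕ → Val
| 0 => k
| 1 => x
| n+2 => .var n

def subst1C (c : Comp) (v : Val) : Comp := substC (sub1 v) c
def subst1V (w : Val) (v : Val) : Val := substV (sub1 v) w

/-! ## Evaluation contexts and small-step operational semantics -/

inductive EC : Type
| hole
| letE (E : EC) (c : Comp)

def plug : EC → Comp → Comp
| .hole, c => c
| .letE E c₂, c => .letin (plug E c) c₂

def renameE (ξ : ℕ → ℕ) : EC → EC
| .hole => .hole
| .letE E c => .letE (renameE ξ E) (renameC (liftR ξ) c)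

/-- the captured delimited continuation `λ y. with h handle E[return y]` -/
def contOf (r : Comp) (ops : ℕ → Comp) (E : EC) : Val :=
  .lam (.handle (renameC (liftR Nat.succ) r)
    (fun o => renameC (liftR (liftR Nat.succ)) (ops o))
    (plug (renameE Nat.succ E) (.ret (.var 0))))

inductive Step : Comp → Comp → Prop
| letc {c₁ c₂ c} : Step c₁ c₂ → Step (.letin c₁ c) (.letin c₂ c)
| letret {v c} : Step (.letin (.ret v) c) (subst1C c v)
| lamapp {c v} : Step (.app (.lam c) v) (subst1C c v)
| fixapp {v v'} : Step (.app (.fix v) v') (.app (subst1V v (.fix v)) v')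
| iftrue {c₁ c₂} : Step (.ite .tt c₁ c₂) c₁
| iffalse {c₁ c₂} : Step (.ite .ff c₁ c₂) c₂
| han {r ops c c'} : Step c c' → Step (.handle r ops c) (.handle r ops c')
| hret {r ops v} : Step (.handle r ops (.ret v)) (subst1C r v)
| hop {r ops E o v} :
    Step (.handle r ops (plug E (.op o v)))
      (substC (sub2 v (contOf r ops E)) (ops o))
| projr {f l} : Step (.proj (.record f) l) (.ret (f l))

abbrev StepStar : Comp → Comp → Prop := Relation.ReflTransGen Step
abbrev StepPlus : Comp → Comp → Prop := Relation.TransGen Step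

/-! ## ATM types and subtyping -/

mutual
inductive VTy : Type
| unit
| bool
| arrow (τ : VTy) (ρ : CTy)
inductive CTy : Type
| pure (τ : VTy)
| eff (τ : VTy) (ρ₁ ρ₂ : CTy)
end

mutual
inductive SubV : VTy → VTy → Prop
| unit : SubV .unit .unit
| bool : SubV .bool .bool
| arrow {τ₁ τ₂ ρ₁ ρ₂} : SubV τ₂ τ₁ → SubC ρ₁ ρ₂ → SubV (.arrow τ₁ ρ₁) (.arrow τ₂ ρ₂)
inductive SubC : CTy → CTy → Prop
| pure {τ₁ τ₂} : SubV τ₁ τ₂ → SubC (.pure τ₁) (.pure τ₂)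
| ipure {τ₁ τ₂ ρ₁ ρ₂ ρ₁' ρ₂'} :
    SubV τ₁ τ₂ → SubC ρ₂ ρ₁ → SubC ρ₁' ρ₂' → SubC (.eff τ₁ ρ₁ ρ₁') (.eff τ₂ ρ₂ ρ₂')
| embed {τ₁ τ₂ ρ₁ ρ₂} : SubV τ₁ τ₂ → SubC ρ₁ ρ₂ → SubC (.pure τ₁) (.eff τ₂ ρ₁ ρ₂)
end

/-- An operation signature Σ: each operation `o` has type
    `arg o → res o / ans1 o ⇒ ans2 o`. -/
structure Sig where
  arg : ℕ → VTy
  res : ℕ → VTy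
  ans1 : ℕ → CTy
  ans2 : ℕ → CTy

/-! ## The ATM type system ⊢_ATM -/

mutual
inductive TV : Sig → List VTy → Val → VTy → Prop
| unit {S Γ} : TV S Γ .unit .unit
| tt {S Γ} : TV S Γ .tt .bool
| ff {S Γ} : TV S Γ .ff .bool
| var {S Γ n τ} : Γ[n]? = some τ → TV S Γ (.var n) τ
| lam {S Γ τ c ρ} : TC S (τ :: Γ) c ρ → TV S Γ (.lam c) (.arrow τ ρ)
| fix {S Γ τ v} : TV S (τ :: Γ) v τ → TV S Γ (.fix v) τ
| vsub {S Γ v τ τ'} : TV S Γ v τ → SubV τ τ' → TV S Γ v τ'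
inductive TC : Sig → List VTy → Comp → CTy → Prop
| ret {S Γ v τ} : TV S Γ v τ → TC S Γ (.ret v) (.pure τ)
| app {S Γ v₁ v₂ τ ρ} : TV S Γ v₁ (.arrow τ ρ) → TV S Γ v₂ τ → TC S Γ (.app v₁ v₂) ρ
| ite {S Γ v c₁ c₂ ρ} :
    TV S Γ v .bool → TC S Γ c₁ ρ → TC S Γ c₂ ρ → TC S Γ (.ite v c₁ c₂) ρ
| letP {S Γ c₁ c₂ τ₁ τ₂} :
    TC S Γ c₁ (.pure τ₁) → TC S (τ₁ :: Γ) c₂ (.pure τ₂) →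
    TC S Γ (.letin c₁ c₂) (.pure τ₂)
| letIp {S Γ c₁ c₂ τ₁ τ₂ ρ₁ ρ₁' ρ₂} :
    TC S Γ c₁ (.eff τ₁ ρ₁ ρ₁') → TC S (τ₁ :: Γ) c₂ (.eff τ₂ ρ₂ ρ₁) →
    TC S Γ (.letin c₁ c₂) (.eff τ₂ ρ₂ ρ₁')
| op {S Γ o v} : TV S Γ v (S.arg o) → TC S Γ (.op o v) (.eff (S.res o) (S.ans1 o) (S.ans2 o))
| handle {S Γ r ops c τ ρ ρ'} :
    (∀ o, TC S (.arrow (S.res o) (S.ans1 o) :: S.arg o :: Γ) (ops o) (S.ans2 o)) →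
    TC S (τ :: Γ) r ρ →
    TC S Γ c (.eff τ ρ ρ') →
    TC S Γ (.handle r ops c) ρ'
| csub {S Γ c ρ ρ'} : TC S Γ c ρ → SubC ρ ρ' → TC S Γ c ρ'
end

/-! ## Simple types and the simple type system ⊢_ST (on λEH with records).
    `STy.sig` is the record type `⟦Σ⟧`; the system is parametrized by an
    interpretation `I : ℕ → STy` of its fields and by an operation
    signature `SS`. -/

inductive STy : Type
| unit
| bool
| arrow (σ₁ σ₂ : STy)
| sig

structure SigS where
  arg : ℕ → STy
  res : ℕ → STy

mutual
inductive SV : (ℕ → STy) → SigS → List STy → Val → STy → Prop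
| unit {I SS Γ} : SV I SS Γ .unit .unit
| tt {I SS Γ} : SV I SS Γ .tt .bool
| ff {I SS Γ} : SV I SS Γ .ff .bool
| var {I SS Γ n σ} : Γ[n]? = some σ → SV I SS Γ (.var n) σ
| lam {I SS Γ σ c σ'} : SC I SS (σ :: Γ) c σ' → SV I SS Γ (.lam c) (.arrow σ σ')
| fix {I SS Γ σ v} : SV I SS (σ :: Γ) v σ → SV I SS Γ (.fix v) σ
| record {I SS Γ f} : (∀ o, SV I SS Γ (f o) (I o)) → SV I SS Γ (.record f) .sig
inductive SC : (ℕ → STy) → SigS → List STy → Comp → STy → Prop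
| ret {I SS Γ v σ} : SV I SS Γ v σ → SC I SS Γ (.ret v) σ
| app {I SS Γ v₁ v₂ σ σ'} :
    SV I SS Γ v₁ (.arrow σ σ') → SV I SS Γ v₂ σ → SC I SS Γ (.app v₁ v₂) σ'
| ite {I SS Γ v c₁ c₂ σ} :
    SV I SS Γ v .bool → SC I SS Γ c₁ σ → SC I SS Γ c₂ σ → SC I SS Γ (.ite v c₁ c₂) σ
| letin {I SS Γ c₁ c₂ σ σ'} :
    SC I SS Γ c₁ σ → SC I SS (σ :: Γ) c₂ σ' → SC I SS Γ (.letin c₁ c₂) σ'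
| op {I SS Γ o v} : SV I SS Γ v (SS.arg o) → SC I SS Γ (.op o v) (SS.res o)
| handle {I SS Γ r ops c σ σ'} :
    SC I SS (σ :: Γ) r σ' →
    (∀ o, SC I SS (.arrow (SS.res o) σ' :: SS.arg o :: Γ) (ops o) σ') →
    SC I SS Γ c σ →
    SC I SS Γ (.handle r ops c) σ'
| proj {I SS Γ v l} : SV I SS Γ v .sig → SC I SS Γ (.proj v l) (I l)
end

/-! ## Derivation trees (Type-valued) for subtyping and ATM typing,
    used by the typing-derivation-directed CPS transformation -/

mutual
inductive SubVD : VTy → VTy → Type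
| unit : SubVD .unit .unit
| bool : SubVD .bool .bool
| arrow {τ₁ τ₂ ρ₁ ρ₂} : SubVD τ₂ τ₁ → SubCD ρ₁ ρ₂ → SubVD (.arrow τ₁ ρ₁) (.arrow τ₂ ρ₂)
inductive SubCD : CTy → CTy → Type
| pure {τ₁ τ₂} : SubVD τ₁ τ₂ → SubCD (.pure τ₁) (.pure τ₂)
| ipure {τ₁ τ₂ ρ₁ ρ₂ ρ₁' ρ₂'} :
    SubVD τ₁ τ₂ → SubCD ρ₂ ρ₁ → SubCD ρ₁' ρ₂' → SubCD (.eff τ₁ ρ₁ ρ₁') (.eff τ₂ ρ₂ ρ₂')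
| embed {τ₁ τ₂ ρ₁ ρ₂} : SubVD τ₁ τ₂ → SubCD ρ₁ ρ₂ → SubCD (.pure τ₁) (.eff τ₂ ρ₁ ρ₂)
end

mutual
inductive TVD : Sig → List VTy → Val → VTy → Type
| unit {S Γ} : TVD S Γ .unit .unit
| tt {S Γ} : TVD S Γ .tt .bool
| ff {S Γ} : TVD S Γ .ff .bool
| var {S Γ τ} (n : ℕ) : Γ[n]? = some τ → TVD S Γ (.var n) τ
| lam {S Γ τ c ρ} : TCD S (τ :: Γ) c ρ → TVD S Γ (.lam c) (.arrow τ ρ)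
| fix {S Γ τ v} : TVD S (τ :: Γ) v τ → TVD S Γ (.fix v) τ
| vsub {S Γ v τ τ'} : TVD S Γ v τ → SubVD τ τ' → TVD S Γ v τ'
inductive TCD : Sig → List VTy → Comp → CTy → Type
| ret {S Γ v τ} : TVD S Γ v τ → TCD S Γ (.ret v) (.pure τ)
| app {S Γ v₁ v₂ τ ρ} : TVD S Γ v₁ (.arrow τ ρ) → TVD S Γ v₂ τ → TCD S Γ (.app v₁ v₂) ρ
| ite {S Γ v c₁ c₂ ρ} :
    TVD S Γ v .bool → TCD S Γ c₁ ρ → TCD S Γ c₂ ρ → TCD S Γ (.ite v c₁ c₂) ρ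
| letP {S Γ c₁ c₂ τ₁ τ₂} :
    TCD S Γ c₁ (.pure τ₁) → TCD S (τ₁ :: Γ) c₂ (.pure τ₂) →
    TCD S Γ (.letin c₁ c₂) (.pure τ₂)
| letIp {S Γ c₁ c₂ τ₁ τ₂ ρ₁ ρ₁' ρ₂} :
    TCD S Γ c₁ (.eff τ₁ ρ₁ ρ₁') → TCD S (τ₁ :: Γ) c₂ (.eff τ₂ ρ₂ ρ₁) →
    TCD S Γ (.letin c₁ c₂) (.eff τ₂ ρ₂ ρ₁')
| op {S Γ} (o : ℕ) {v} :
    TVD S Γ v (S.arg o) → TCD S Γ (.op o v) (.eff (S.res o) (S.ans1 o) (S.ans2 o))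
| handle {S Γ r ops c τ ρ ρ'} :
    (∀ o, TCD S (.arrow (S.res o) (S.ans1 o) :: S.arg o :: Γ) (ops o) (S.ans2 o)) →
    TCD S (τ :: Γ) r ρ →
    TCD S Γ c (.eff τ ρ ρ') →
    TCD S Γ (.handle r ops c) ρ'
| csub {S Γ c ρ ρ'} : TCD S Γ c ρ → SubCD ρ ρ' → TCD S Γ c ρ'
end

/-! ## The CPS transformation -/

/-! CPS transformation of ATM value and computation types into simple types;
    `⟦τ/ρ₁⇒ρ₂⟧ = ⟦Σ⟧ → (⟦τ⟧ → ⟦ρ₁⟧) → ⟦ρ₂⟧`, where `⟦Σ⟧` is `STy.sig`. -/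
mutual
def cpsT : VTy → STy
| .unit => .unit
| .bool => .bool
| .arrow τ ρ => .arrow (cpsT τ) (cpsCT ρ)
def cpsCT : CTy → STy
| .pure τ => cpsT τ
| .eff τ ρ₁ ρ₂ => .arrow .sig (.arrow (.arrow (cpsT τ) (cpsCT ρ₁)) (cpsCT ρ₂))
end

/-- the field types of the record type `⟦Σ⟧` -/
def opSTy (S : Sig) : ℕ → STy := fun o =>
  .arrow (cpsT (S.arg o)) (.arrow (.arrow (cpsT (S.res o)) (cpsCT (S.ans1 o))) (cpsCT (S.ans2 o)))

/-- application of a computation to a computation (left-to-right sequencing sugar) -/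
def apc (c₁ c₂ : Comp) : Comp :=
  .letin c₁ (.letin (renameC Nat.succ c₂) (.app (.var 1) (.var 0)))

/-! CPS transformation of subtyping derivations, given as the coercion
    they induce on (already-transformed) terms; the static applications `@`
    of the paper are performed on the fly. -/
mutual
def coerceV : {τ τ' : VTy} → SubVD τ τ' → Val → Val
| _, _, .unit, v => v
| _, _, .bool, v => v
| _, _, .arrow d21 d12, f =>
    .lam (coerceC d12 (.app (renameV Nat.succ f) (coerceV d21 (.var 0))))
def coerceC : {ρ ρ' : CTy} → SubCD ρ ρ' → Comp → Comp
| _, _, .pure d, c => .letin c (.ret (coerceV d (.var 0)))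
| _, _, .ipure dT d21 d12, c =>
    .ret (.lam (.ret (.lam (coerceC d12
      (apc (apc (renameC (fun n => n + 2) c) (.ret (.var 1)))
        (.ret (.lam (coerceC d21 (apc (.ret (.var 1)) (.ret (coerceV dT (.var 0))))))))))))
| _, _, .embed dT dR, c =>
    .ret (.lam (.ret (.lam (coerceC dR
      (.letin (renameC (fun n => n + 2) c)
        (apc (.ret (.var 1)) (.ret (coerceV dT (.var 0)))))))))
end

/-! the typing-derivation-directed CPS transformation -/
mutual
def cpsV {S : Sig} : {Γ : List VTy} → {v : Val} → {τ : VTy} → TVD S Γ v τ → Val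
| _, _, _, .unit => .unit
| _, _, _, .tt => .tt
| _, _, _, .ff => .ff
| _, _, _, .var n _ => .var n
| _, _, _, .lam D => .lam (cpsC D)
| _, _, _, .fix D => .fix (cpsV D)
| _, _, _, .vsub D d => coerceV d (cpsV D)
def cpsC {S : Sig} : {Γ : List VTy} → {c : Comp} → {ρ : CTy} → TCD S Γ c ρ → Comp
| _, _, _, .ret D => .ret (cpsV D)
| _, _, _, .app D₁ D₂ => .app (cpsV D₁) (cpsV D₂)
| _, _, _, .ite Dv D₁ D₂ => .ite (cpsV Dv) (cpsC D₁) (cpsC D₂)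
| _, _, _, .letP D₁ D₂ => .letin (cpsC D₁) (cpsC D₂)
| _, _, _, .letIp D₁ D₂ =>
    .ret (.lam (.ret (.lam (apc (apc (renameC (fun n => n + 2) (cpsC D₁)) (.ret (.var 1)))
      (.ret (.lam (apc (apc (renameC (liftR (fun n => n + 2)) (cpsC D₂)) (.ret (.var 2)))
        (.ret (.var 1)))))))))
| _, _, _, .op o Dv =>
    .ret (.lam (.ret (.lam (apc (apc (.proj (.var 1) o)
      (.ret (renameV (fun n => n + 2) (cpsV Dv)))) (.ret (.var 0))))))
| _, _, _, .handle Dops Dret Dc =>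
    apc (apc (cpsC Dc) (.ret (.record (fun o => .lam (.ret (.lam (cpsC (Dops o))))))))
      (.ret (.lam (cpsC Dret)))
| _, _, _, .csub D d => coerceC d (cpsC D)
end

/-- `⟦D⟧ v_h v_k`: applying a CPS-transformed effectful computation to a
    (translated) handler record and continuation -/
def capp2 (c : Comp) (vh vk : Val) : Comp := apc (apc c (.ret vh)) (.ret vk)

/-! ## Effect-handler-freeness and rec-freeness -/

mutual
def hfV : Val → Prop
| .var _ => True
| .unit => True
| .tt => True
| .ff => True
| .lam c => hfC c
| .fix v => hfV v
| .record f => ∀ o, hfV (f o)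
def hfC : Comp → Prop
| .ret v => hfV v
| .op _ _ => False
| .app v₁ v₂ => hfV v₁ ∧ hfV v₂
| .ite v c₁ c₂ => hfV v ∧ hfC c₁ ∧ hfC c₂
| .letin c₁ c₂ => hfC c₁ ∧ hfC c₂
| .handle _ _ _ => False
| .proj v _ => hfV v
end

mutual
def recFreeV : Val → Prop
| .var _ => True
| .unit => True
| .tt => True
| .ff => True
| .lam c => recFreeC c
| .fix _ => False
| .record f => ∀ o, recFreeV (f o)
def recFreeC : Comp → Prop
| .ret v => recFreeV v
| .op _ v => recFreeV v
| .app v₁ v₂ => recFreeV v₁ ∧ recFreeV v₂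
| .ite v c₁ c₂ => recFreeV v ∧ recFreeC c₁ ∧ recFreeC c₂
| .letin c₁ c₂ => recFreeC c₁ ∧ recFreeC c₂
| .handle r ops c => recFreeC r ∧ (∀ o, recFreeC (ops o)) ∧ recFreeC c
| .proj v _ => recFreeV v
end

end LEH

/-! Both claims follow by mutual induction on the typing derivation. The transform of a
rule only ever wraps the transforms of its premises in the administrative binders `λh.λk`
(and `apc`'s `let`s), so the two facts needed besides the induction hypotheses are that
weakening renamings preserve simple typing and that the coercion induced by a subtyping
derivation `τ ≤ τ'` maps terms of type `⟦τ⟧` to terms of type `⟦τ'⟧`. Handler-freeness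
holds because the transformation turns handlers into records and operation calls into
projections, and never emits `handle` or `op`. -/

namespace LEH

def TypedRenaming (Γ Γ' : List STy) (ξ : ℕ → ℕ) : Prop :=
  ∀ n σ, Γ[n]? = some σ → Γ'[ξ n]? = some σ

namespace TypedRenaming

theorem liftR {Γ Γ' : List STy} {ξ : ℕ → ℕ} (h : TypedRenaming Γ Γ' ξ) (σ : STy) :
    TypedRenaming (σ :: Γ) (σ :: Γ') (liftR ξ)
  | 0, _, hn => hn
  | n + 1, τ, hn => h n τ hn

theorem succ {Γ : List STy} (σ : STy) : TypedRenaming Γ (σ :: Γ) Nat.succ :=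
  fun _ _ h => h

theorem add_two {Γ : List STy} (σ₁ σ₂ : STy) :
    TypedRenaming Γ (σ₁ :: σ₂ :: Γ) (fun n => n + 2) :=
  fun _ _ h => h

end TypedRenaming

section

variable {I : ℕ → STy} {SS : SigS}

mutual
theorem SV.rename {Γ v σ} (h : SV I SS Γ v σ) {Γ' ξ} (hξ : TypedRenaming Γ Γ' ξ) :
    SV I SS Γ' (renameV ξ v) σ := by
  cases h with
  | unit => exact .unit
  | tt => exact .tt
  | ff => exact .ff
  | var hn => exact .var (hξ _ _ hn)
  | lam h => exact .lam (h.rename (hξ.liftR _))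
  | fix h => exact .fix (h.rename (hξ.liftR _))
  | record h => exact .record fun o => (h o).rename hξ
theorem SC.rename {Γ c σ} (h : SC I SS Γ c σ) {Γ' ξ} (hξ : TypedRenaming Γ Γ' ξ) :
    SC I SS Γ' (renameC ξ c) σ := by
  cases h with
  | ret h => exact .ret (h.rename hξ)
  | app h₁ h₂ => exact .app (h₁.rename hξ) (h₂.rename hξ)
  | ite hv h₁ h₂ => exact .ite (hv.rename hξ) (h₁.rename hξ) (h₂.rename hξ)
  | letin h₁ h₂ => exact .letin (h₁.rename hξ) (h₂.rename (hξ.liftR _))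
  | op h => exact .op (h.rename hξ)
  | handle hr hops hc =>
      exact .handle (hr.rename (hξ.liftR _)) (fun o => (hops o).rename ((hξ.liftR _).liftR _))
        (hc.rename hξ)
  | proj h => exact .proj (h.rename hξ)
end

theorem SC.apc {Γ σ σ' c₁ c₂} (h₁ : SC I SS Γ c₁ (.arrow σ σ')) (h₂ : SC I SS Γ c₂ σ) :
    SC I SS Γ (apc c₁ c₂) σ' :=
  .letin h₁ (.letin (h₂.rename (.succ _)) (.app (.var rfl) (.var rfl)))

mutual
theorem SV.coerceV : ∀ {τ τ'} (d : SubVD τ τ') {Γ v},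
    SV I SS Γ v (cpsT τ) → SV I SS Γ (coerceV d v) (cpsT τ')
  | _, _, .unit, _, _, h => h
  | _, _, .bool, _, _, h => h
  | _, _, .arrow d₁ d₂, _, _, h =>
      .lam (SC.coerceC d₂ (.app (h.rename (.succ _)) (SV.coerceV d₁ (.var rfl))))
theorem SC.coerceC : ∀ {ρ ρ'} (d : SubCD ρ ρ') {Γ c},
    SC I SS Γ c (cpsCT ρ) → SC I SS Γ (coerceC d c) (cpsCT ρ')
  | _, _, .pure d, _, _, h => .letin h (.ret (SV.coerceV d (.var rfl)))
  | _, _, .ipure dT d₁ d₂, _, _, h =>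
      .ret (.lam (.ret (.lam (SC.coerceC d₂
        (((h.rename (.add_two _ _)).apc (.ret (.var rfl))).apc
          (.ret (.lam (SC.coerceC d₁
            ((SC.ret (.var rfl)).apc (.ret (SV.coerceV dT (.var rfl))))))))))))
  | _, _, .embed dT d, _, _, h =>
      .ret (.lam (.ret (.lam (SC.coerceC d
        (.letin (h.rename (.add_two _ _))
          ((SC.ret (.var rfl)).apc (.ret (SV.coerceV dT (.var rfl)))))))))
end

mutual
@[simp] theorem hfV_renameV (ξ : ℕ → ℕ) : ∀ v, hfV (renameV ξ v) ↔ hfV v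
  | .var _ | .unit | .tt | .ff => Iff.rfl
  | .lam c => hfC_renameC _ c
  | .fix v => hfV_renameV _ v
  | .record f => forall_congr' fun o => hfV_renameV ξ (f o)
@[simp] theorem hfC_renameC (ξ : ℕ → ℕ) : ∀ c, hfC (renameC ξ c) ↔ hfC c
  | .ret v => hfV_renameV ξ v
  | .op _ _ | .handle _ _ _ => Iff.rfl
  | .app v₁ v₂ => and_congr (hfV_renameV ξ v₁) (hfV_renameV ξ v₂)
  | .ite v c₁ c₂ =>
      and_congr (hfV_renameV ξ v) (and_congr (hfC_renameC ξ c₁) (hfC_renameC ξ c₂))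
  | .letin c₁ c₂ => and_congr (hfC_renameC ξ c₁) (hfC_renameC _ c₂)
  | .proj v _ => hfV_renameV ξ v
end

theorem hfC_apc {c₁ c₂ : Comp} (h₁ : hfC c₁) (h₂ : hfC c₂) : hfC (apc c₁ c₂) :=
  ⟨h₁, (hfC_renameC _ c₂).2 h₂, trivial, trivial⟩

mutual
theorem hfV_coerceV : ∀ {τ τ'} (d : SubVD τ τ') {v}, hfV v → hfV (coerceV d v)
  | _, _, .unit, _, h => h
  | _, _, .bool, _, h => h
  | _, _, .arrow d₁ d₂, v, h =>
      hfC_coerceC d₂ ⟨(hfV_renameV _ v).2 h, hfV_coerceV d₁ trivial⟩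
theorem hfC_coerceC : ∀ {ρ ρ'} (d : SubCD ρ ρ') {c}, hfC c → hfC (coerceC d c)
  | _, _, .pure d, _, h => ⟨h, hfV_coerceV d trivial⟩
  | _, _, .ipure dT d₁ d₂, c, h =>
      hfC_coerceC d₂ (hfC_apc (hfC_apc ((hfC_renameC _ c).2 h) trivial)
        (hfC_coerceC d₁ (hfC_apc trivial (hfV_coerceV dT trivial))))
  | _, _, .embed dT d, c, h =>
      hfC_coerceC d ⟨(hfC_renameC _ c).2 h, hfC_apc trivial (hfV_coerceV dT trivial)⟩
end

variable {S : Sig}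

mutual
theorem SV.cpsV : ∀ {Γ v τ} (D : TVD S Γ v τ),
    SV (opSTy S) SS (Γ.map cpsT) (cpsV D) (cpsT τ)
  | _, _, _, .unit => .unit
  | _, _, _, .tt => .tt
  | _, _, _, .ff => .ff
  | _, _, _, .var _ h => .var (by rw [List.getElem?_map, h]; rfl)
  | _, _, _, .lam D => .lam (SC.cpsC D)
  | _, _, _, .fix D => .fix (SV.cpsV D)
  | _, _, _, .vsub D d => (SV.cpsV D).coerceV d
theorem SC.cpsC : ∀ {Γ c ρ} (D : TCD S Γ c ρ),
    SC (opSTy S) SS (Γ.map cpsT) (cpsC D) (cpsCT ρ)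
  | _, _, _, .ret D => .ret (SV.cpsV D)
  | _, _, _, .app D₁ D₂ => .app (SV.cpsV D₁) (SV.cpsV D₂)
  | _, _, _, .ite Dv D₁ D₂ => .ite (SV.cpsV Dv) (SC.cpsC D₁) (SC.cpsC D₂)
  | _, _, _, .letP D₁ D₂ => .letin (SC.cpsC D₁) (SC.cpsC D₂)
  | _, _, _, .letIp D₁ D₂ =>
      .ret (.lam (.ret (.lam
        ((((SC.cpsC D₁).rename (.add_two _ _)).apc (.ret (.var rfl))).apc
          (.ret (.lam
            ((((SC.cpsC D₂).rename ((TypedRenaming.add_two _ _).liftR _)).apc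
              (.ret (.var rfl))).apc (.ret (.var rfl)))))))))
  | _, _, _, .op _ Dv =>
      .ret (.lam (.ret (.lam
        (((SC.proj (.var rfl)).apc (.ret ((SV.cpsV Dv).rename (.add_two _ _)))).apc
          (.ret (.var rfl))))))
  | _, _, _, .handle Dops Dret Dc =>
      ((SC.cpsC Dc).apc (.ret (.record fun o => .lam (.ret (.lam (SC.cpsC (Dops o))))))).apc
        (.ret (.lam (SC.cpsC Dret)))
  | _, _, _, .csub D d => (SC.cpsC D).coerceC d
end

mutual
theorem hfV_cpsV : ∀ {Γ v τ} (D : TVD S Γ v τ), hfV (cpsV D)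
  | _, _, _, .unit | _, _, _, .tt | _, _, _, .ff | _, _, _, .var _ _ => trivial
  | _, _, _, .lam D => hfC_cpsC D
  | _, _, _, .fix D => hfV_cpsV D
  | _, _, _, .vsub D d => hfV_coerceV d (hfV_cpsV D)
theorem hfC_cpsC : ∀ {Γ c ρ} (D : TCD S Γ c ρ), hfC (cpsC D)
  | _, _, _, .ret D => hfV_cpsV D
  | _, _, _, .app D₁ D₂ => ⟨hfV_cpsV D₁, hfV_cpsV D₂⟩
  | _, _, _, .ite Dv D₁ D₂ => ⟨hfV_cpsV Dv, hfC_cpsC D₁, hfC_cpsC D₂⟩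
  | _, _, _, .letP D₁ D₂ => ⟨hfC_cpsC D₁, hfC_cpsC D₂⟩
  | _, _, _, .letIp D₁ D₂ =>
      hfC_apc (hfC_apc ((hfC_renameC _ _).2 (hfC_cpsC D₁)) trivial)
        (hfC_apc (hfC_apc ((hfC_renameC _ _).2 (hfC_cpsC D₂)) trivial) trivial)
  | _, _, _, .op _ Dv =>
      hfC_apc (hfC_apc trivial ((hfV_renameV _ _).2 (hfV_cpsV Dv))) trivial
  | _, _, _, .handle Dops Dret Dc =>
      hfC_apc (hfC_apc (hfC_cpsC Dc) fun o => hfC_cpsC (Dops o)) (hfC_cpsC Dret)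
  | _, _, _, .csub D d => hfC_coerceC d (hfC_cpsC D)
end

end

/-- Typability preservation for the typing-derivation-directed CPS transformation:
    the transform of an ATM typing derivation is well-typed in the simple type
    system, and contains no effect handlers or operation invocations. -/
theorem cps_typability_preservation (S : Sig) (SS : SigS) :
    (∀ (Γ : List VTy) (v : Val) (τ : VTy) (D : TVD S Γ v τ),
      SV (opSTy S) SS (Γ.map cpsT) (cpsV D) (cpsT τ) ∧ hfV (cpsV D)) ∧
    (∀ (Γ : List VTy) (c : Comp) (ρ : CTy) (D : TCD S Γ c ρ),
      SC (opSTy S) SS (Γ.map cpsT) (cpsC D) (cpsCT ρ) ∧ hfC (cpsC D)) :=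
  ⟨fun _ _ _ D => ⟨SV.cpsV D, hfV_cpsV D⟩, fun _ _ _ D => ⟨SC.cpsC D, hfC_cpsC D⟩⟩

end LEH
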